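/- Let β : Lit_A → ℕ[X,X̄] be a provenance-tracking interpretation that is model-defining, with 𝔄_β the model it defines. Then for every first-order sentence φ over 𝒱: β⟦φ⟧ ≠ 0 if and only if 𝔄_β ⊨ φ. (Note that this does not follow from positivity of the semiring, since ℕ[X,X̄] has divisors of zero.) -/

import Mathlib

/-- A finite relational vocabulary: a type of relation symbols with arities. -/
structure Vocab : Type 1 where
  Rel : Type
  arity : Rel → ℕ

/-- First-order formulas over a relational vocabulary `𝒱` (with equality),
with variables from `Vars`.  Negated atoms are included as primitive literals. -/
inductive Formula (𝒱 : Vocab) (Vars : Type) : Type where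
  | rel    : (R : 𝒱.Rel) → (Fin (𝒱.arity R) → Vars) → Formula 𝒱 Vars
  | nrel   : (R : 𝒱.Rel) → (Fin (𝒱.arity R) → Vars) → Formula 𝒱 Vars
  | equal  : Vars → Vars → Formula 𝒱 Vars
  | nequal : Vars → Vars → Formula 𝒱 Vars
  | and    : Formula 𝒱 Vars → Formula 𝒱 Vars → Formula 𝒱 Vars
  | or     : Formula 𝒱 Vars → Formula 𝒱 Vars → Formula 𝒱 Vars
  | all    : Vars → Formula 𝒱 Vars → Formula 𝒱 Vars
  | ex     : Vars → Formula 𝒱 Vars → Formula 𝒱 Vars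
  | not    : Formula 𝒱 Vars → Formula 𝒱 Vars

/-- A ground literal over vocabulary `𝒱` and universe `A`: a positive
(`pos = true`) or negated (`pos = false`) ground atom `R(ā)`. -/
structure Lit (𝒱 : Vocab) (A : Type) where
  pos : Bool
  R : 𝒱.Rel
  args : Fin (𝒱.arity R) → A

/-- Negation of a literal (the negation of a literal is again a literal). -/
def Lit.neg {𝒱 : Vocab} {A : Type} (L : Lit 𝒱 A) : Lit 𝒱 A := ⟨!L.pos, L.R, L.args⟩

namespace Formula

variable {𝒱 : Vocab} {Vars : Type}

/-- Size of a formula (used for termination of the semiring semantics). -/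
def size : Formula 𝒱 Vars → ℕ
  | rel _ _ => 1
  | nrel _ _ => 1
  | equal _ _ => 1
  | nequal _ _ => 1
  | and φ ψ => φ.size + ψ.size + 1
  | or φ ψ => φ.size + ψ.size + 1
  | all _ φ => φ.size + 1
  | ex _ φ => φ.size + 1
  | not φ => φ.size + 1

mutual
/-- Negation normal form of a formula. -/
def nnf : Formula 𝒱 Vars → Formula 𝒱 Vars
  | rel R v => rel R v
  | nrel R v => nrel R v
  | equal x y => equal x y
  | nequal x y => nequal x y
  | and φ ψ => and φ.nnf ψ.nnf
  | or φ ψ => or φ.nnf ψ.nnf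
  | all x φ => all x φ.nnf
  | ex x φ => ex x φ.nnf
  | not φ => nnfNeg φ

/-- Negation normal form of the negation of a formula: `nnfNeg φ = nnf (¬φ)`. -/
def nnfNeg : Formula 𝒱 Vars → Formula 𝒱 Vars
  | rel R v => nrel R v
  | nrel R v => rel R v
  | equal x y => nequal x y
  | nequal x y => equal x y
  | and φ ψ => or (nnfNeg φ) (nnfNeg ψ)
  | or φ ψ => and (nnfNeg φ) (nnfNeg ψ)
  | all x φ => ex x (nnfNeg φ)
  | ex x φ => all x (nnfNeg φ)
  | not φ => nnf φ
end

theorem size_nnf_le (φ : Formula 𝒱 Vars) : φ.nnf.size ≤ φ.size ∧ (nnfNeg φ).size ≤ φ.size := by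
  induction φ <;> simp_all [nnf, nnfNeg, size] <;> omega

/-- Free variables of a formula. -/
def FV [DecidableEq Vars] : Formula 𝒱 Vars → Finset Vars
  | rel _ v => Finset.image v Finset.univ
  | nrel _ v => Finset.image v Finset.univ
  | equal x y => {x, y}
  | nequal x y => {x, y}
  | and φ ψ => φ.FV ∪ ψ.FV
  | or φ ψ => φ.FV ∪ ψ.FV
  | all x φ => φ.FV.erase x
  | ex x φ => φ.FV.erase x
  | not φ => φ.FV

end Formula

section Semantics

variable {𝒱 : Vocab} {Vars A K : Type} [DecidableEq Vars] [Fintype A] [DecidableEq A]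
  [CommSemiring K]

/-- The extension of a `K`-interpretation `π : Lit 𝒱 A → K` to first-order formulas,
relative to a valuation `ν : Vars → A`:  `eval π φ ν = π⟦φ⟧ν`. -/
def eval (π : Lit 𝒱 A → K) : Formula 𝒱 Vars → (Vars → A) → K
  | .rel R v, ν => π ⟨true, R, fun i => ν (v i)⟩
  | .nrel R v, ν => π ⟨false, R, fun i => ν (v i)⟩
  | .equal x y, ν => if ν x = ν y then 1 else 0
  | .nequal x y, ν => if ν x ≠ ν y then 1 else 0
  | .and φ ψ, ν => eval π φ ν * eval π ψ ν
  | .or φ ψ, ν => eval π φ ν + eval π ψ ν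
  | .all x φ, ν => ∏ a : A, eval π φ (Function.update ν x a)
  | .ex x φ, ν => ∑ a : A, eval π φ (Function.update ν x a)
  | .not φ, ν => eval π (Formula.nnfNeg φ) ν
termination_by φ _ => φ.size
decreasing_by
  all_goals simp [Formula.size]
  all_goals first
    | omega
    | exact Nat.lt_succ_of_le (Formula.size_nnf_le _).2
    | exact (Formula.size_nnf_le _).2

end Semantics

/-- A `𝒱`-structure with universe `A`: an interpretation of each relation symbol. -/
def Struc (𝒱 : Vocab) (A : Type) := (R : 𝒱.Rel) → (Fin (𝒱.arity R) → A) → Prop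

/-- Standard (Tarski) satisfaction of a literal in a structure. -/
def Struc.SatLit {𝒱 : Vocab} {A : Type} (𝔄 : Struc 𝒱 A) (L : Lit 𝒱 A) : Prop :=
  if L.pos then 𝔄 L.R L.args else ¬ 𝔄 L.R L.args

section Sat

variable {𝒱 : Vocab} {Vars A : Type} [DecidableEq Vars]

/-- Standard (Tarski) satisfaction relation `𝔄 ⊨ φ[ν]`. -/
def Sat (𝔄 : Struc 𝒱 A) : Formula 𝒱 Vars → (Vars → A) → Prop
  | .rel R v, ν => 𝔄 R (fun i => ν (v i))
  | .nrel R v, ν => ¬ 𝔄 R (fun i => ν (v i))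
  | .equal x y, ν => ν x = ν y
  | .nequal x y, ν => ν x ≠ ν y
  | .and φ ψ, ν => Sat 𝔄 φ ν ∧ Sat 𝔄 ψ ν
  | .or φ ψ, ν => Sat 𝔄 φ ν ∨ Sat 𝔄 ψ ν
  | .all x φ, ν => ∀ a : A, Sat 𝔄 φ (Function.update ν x a)
  | .ex x φ, ν => ∃ a : A, Sat 𝔄 φ (Function.update ν x a)
  | .not φ, ν => ¬ Sat 𝔄 φ ν

end Sat

section ModelDefining

variable {𝒱 : Vocab} {A K : Type} [CommSemiring K]

/-- A `K`-interpretation is model-defining if for each fact exactly one of the values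
assigned to it and to its negation is `0`. -/
def ModelDefining (π : Lit 𝒱 A → K) : Prop :=
  ∀ L : Lit 𝒱 A, (π L = 0 ∧ π L.neg ≠ 0) ∨ (π L ≠ 0 ∧ π L.neg = 0)

/-- The structure `𝔄_π` defined by a model-defining interpretation `π`:
it satisfies a literal `L` iff `π L ≠ 0`. -/
def StrucOf (π : Lit 𝒱 A → K) : Struc 𝒱 A := fun R a => π ⟨true, R, a⟩ ≠ 0

end ModelDefining

/-- A commutative semiring is positive if it is `+`-positive and has no divisors of zero. -/
def IsPositive (K : Type) [CommSemiring K] : Prop :=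
  (∀ a b : K, a + b = 0 → a = 0 ∧ b = 0) ∧ ∀ a b : K, a * b = 0 → a = 0 ∨ b = 0


open MvPolynomial

/-- Generating relation for the dual-indeterminate congruence: `p · p̄ = 0` for `p ∈ X`
(we realize the set of tokens `X ∪ X̄` as the sum type `X ⊕ X`, with `Sum.inl p = p`
and `Sum.inr p = p̄`). -/
def pairRel (X : Type) : MvPolynomial (X ⊕ X) ℕ → MvPolynomial (X ⊕ X) ℕ → Prop :=
  fun a b => b = 0 ∧ ∃ p : X, a = MvPolynomial.X (Sum.inl p) * MvPolynomial.X (Sum.inr p)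

/-- The semiring congruence on `ℕ[X ∪ X̄]` generated by `p · p̄ = 0` for all `p ∈ X`. -/
noncomputable def dualCon (X : Type) : RingCon (MvPolynomial (X ⊕ X) ℕ) := ringConGen (pairRel X)

/-- `ℕ[X,X̄]`: the commutative semiring of dual-indeterminate polynomials, i.e. the
quotient of the polynomial semiring `ℕ[X ∪ X̄]` by the congruence `p · p̄ = 0`. -/
abbrev DualPoly (X : Type) := (dualCon X).Quotient

/-- The image in `ℕ[X,X̄]` of a provenance token `x ∈ X ∪ X̄`. -/
noncomputable def tok {X : Type} (x : X ⊕ X) : DualPoly X :=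
  ((MvPolynomial.X x : MvPolynomial (X ⊕ X) ℕ) : DualPoly X)

open Classical in
/-- Deleting from a polynomial all monomials that contain a pair of complementary tokens. -/
noncomputable def clean {X : Type} (q : MvPolynomial (X ⊕ X) ℕ) : MvPolynomial (X ⊕ X) ℕ :=
  ∑ m ∈ q.support.filter
      (fun m => ¬ ∃ p : X, m (Sum.inl p) ≠ 0 ∧ m (Sum.inr p) ≠ 0),
    MvPolynomial.monomial m (q.coeff m)

/-- A representative polynomial of an element of `ℕ[X,X̄]`. -/
noncomputable def qrep {X : Type} (q : DualPoly X) : MvPolynomial (X ⊕ X) ℕ :=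
  (Quot.exists_rep q).choose

/-- The coefficient of the monomial `m` in a dual-indeterminate polynomial:
the coefficient of `m` in the canonical (clean) representative. -/
noncomputable def coeffQ {X : Type} (q : DualPoly X) (m : (X ⊕ X) →₀ ℕ) : ℕ :=
  (clean (qrep q)).coeff m

/-- The sum of the monomial coefficients of a dual-indeterminate polynomial. -/
noncomputable def sumCoeff {X : Type} (q : DualPoly X) : ℕ :=
  ∑ m ∈ (clean (qrep q)).support, (clean (qrep q)).coeff m


section DualInterp

variable {𝒱 : Vocab} {A X : Type}

/-- A provenance-tracking interpretation: positive facts are annotated with positive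
tokens (or `0`, `1`), negative facts with negative tokens (or `0`, `1`), with the
convention that the complementary token `p̄` may only annotate the negation of the
fact annotated by `p` (and vice versa). -/
def ProvTracking (π : Lit 𝒱 A → DualPoly X) : Prop :=
  (∀ L : Lit 𝒱 A, L.pos = true → π L = 0 ∨ π L = 1 ∨ ∃ p : X, π L = tok (Sum.inl p)) ∧
  (∀ L : Lit 𝒱 A, L.pos = false → π L = 0 ∨ π L = 1 ∨ ∃ p : X, π L = tok (Sum.inr p)) ∧
  (∀ L L' : Lit 𝒱 A, ∀ p : X,
     π L = tok (Sum.inl p) → π L' = tok (Sum.inr p) → L' = L.neg)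

/-- A model-compatible interpretation: each fact is either tracked by a pair of
complementary tokens `z`, `z̄` (a distinct pair for each tracked fact), or is
annotated by `0` and `1` (untracked false fact) or by `1` and `0` (untracked true
fact). -/
def ModelCompatible (π : Lit 𝒱 A → DualPoly X) : Prop :=
  (∀ L : Lit 𝒱 A, L.pos = true →
      (∃ z : X, π L = tok (Sum.inl z) ∧ π L.neg = tok (Sum.inr z)) ∨
      (π L = 0 ∧ π L.neg = 1) ∨ (π L = 1 ∧ π L.neg = 0)) ∧
  (∀ L L' : Lit 𝒱 A, ∀ z : X, π L = tok (Sum.inl z) → π L' = tok (Sum.inl z) → L = L')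

/-- A structure `𝔄` (with the same universe `A`) is compatible with `π` if `𝔄 ⊨ L`
for every literal `L` with `π L = 1`. -/
def Compatible (π : Lit 𝒱 A → DualPoly X) (𝔄 : Struc 𝒱 A) : Prop :=
  ∀ L : Lit 𝒱 A, π L = 1 → 𝔄.SatLit L

open Classical in
/-- The specialization `π↓𝔄` of an interpretation `π` with respect to a structure `𝔄`:
`π↓𝔄(L) = π(L)` if `𝔄 ⊨ L` and `π↓𝔄(L) = 0` otherwise. -/
noncomputable def specialize {K : Type} [CommSemiring K] (π : Lit 𝒱 A → K)
    (𝔄 : Struc 𝒱 A) : Lit 𝒱 A → K :=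
  fun L => if 𝔄.SatLit L then π L else 0

end DualInterp


/-!
A formula false in `𝔄_β` evaluates to `0` in any semiring, since every false literal is
annotated by `0`. The converse cannot use positivity, as `ℕ[X,X̄]` has zero divisors; instead,
map `ℕ[X,X̄]` to `ℕ` by sending each token occurring among the values of `β` to `1` and every
other token to `0`. This respects `p · p̄ = 0` because `p` and `p̄` can only annotate a literal
and its negation, which `β` does not both send to nonzero values. The image of `β` is then
nonzero exactly on the literals true in `𝔄_β`, and `ℕ` is positive, so a true formula has
nonzero image under the homomorphism and hence a nonzero value.
-/

namespace Formula

variable {𝒱 : Vocab} {Vars : Type}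

/-- The recursion scheme of `eval`: its `not` case recurses into `nnfNeg φ`, which is not a
subformula. -/
theorem induction_nnfNeg {motive : Formula 𝒱 Vars → Prop}
    (rel : ∀ R v, motive (rel R v)) (nrel : ∀ R v, motive (nrel R v))
    (equal : ∀ x y, motive (equal x y)) (nequal : ∀ x y, motive (nequal x y))
    (and : ∀ φ ψ, motive φ → motive ψ → motive (and φ ψ))
    (or : ∀ φ ψ, motive φ → motive ψ → motive (or φ ψ))
    (all : ∀ x φ, motive φ → motive (all x φ)) (ex : ∀ x φ, motive φ → motive (ex x φ))
    (not : ∀ φ, motive (nnfNeg φ) → motive (not φ)) :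
    ∀ φ, motive φ
  | .rel R v => rel R v
  | .nrel R v => nrel R v
  | .equal x y => equal x y
  | .nequal x y => nequal x y
  | .and φ ψ => and φ ψ (induction_nnfNeg rel nrel equal nequal and or all ex not φ)
      (induction_nnfNeg rel nrel equal nequal and or all ex not ψ)
  | .or φ ψ => or φ ψ (induction_nnfNeg rel nrel equal nequal and or all ex not φ)
      (induction_nnfNeg rel nrel equal nequal and or all ex not ψ)
  | .all x φ => all x φ (induction_nnfNeg rel nrel equal nequal and or all ex not φ)
  | .ex x φ => ex x φ (induction_nnfNeg rel nrel equal nequal and or all ex not φ)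
  | .not φ => not φ (induction_nnfNeg rel nrel equal nequal and or all ex not (nnfNeg φ))
termination_by φ => φ.size
decreasing_by
  all_goals simp only [size]
  all_goals first | omega | exact Nat.lt_succ_of_le (size_nnf_le φ).2

end Formula

section Satisfaction

variable {𝒱 : Vocab} {Vars A : Type} [DecidableEq Vars] {𝔄 : Struc 𝒱 A}

theorem sat_nnf_and_sat_nnfNeg (φ : Formula 𝒱 Vars) (ν : Vars → A) :
    (Sat 𝔄 φ.nnf ν ↔ Sat 𝔄 φ ν) ∧ (Sat 𝔄 φ.nnfNeg ν ↔ ¬ Sat 𝔄 φ ν) := by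
  induction φ generalizing ν with
  | rel | equal => exact ⟨Iff.rfl, Iff.rfl⟩
  | nrel | nequal => exact ⟨Iff.rfl, not_not.symm⟩
  | and φ ψ ihφ ihψ | or φ ψ ihφ ihψ =>
    simp only [Formula.nnf, Formula.nnfNeg, Sat, (ihφ ν).1, (ihψ ν).1, (ihφ ν).2, (ihψ ν).2]
    tauto
  | all x φ ih =>
    simp only [Formula.nnf, Formula.nnfNeg, Sat, (ih _).1, (ih _).2, not_forall, true_and]
  | ex x φ ih =>
    simp only [Formula.nnf, Formula.nnfNeg, Sat, (ih _).1, (ih _).2, not_exists, true_and]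
  | not φ ih => simp [Formula.nnf, Formula.nnfNeg, Sat, (ih ν).1, (ih ν).2]

theorem sat_nnfNeg (φ : Formula 𝒱 Vars) (ν : Vars → A) :
    Sat 𝔄 φ.nnfNeg ν ↔ ¬ Sat 𝔄 φ ν :=
  (sat_nnf_and_sat_nnfNeg φ ν).2

theorem Struc.satLit_strucOf_iff {K : Type} [CommSemiring K] {π : Lit 𝒱 A → K}
    (hπ : ModelDefining π) (L : Lit 𝒱 A) : (StrucOf π).SatLit L ↔ π L ≠ 0 := by
  obtain ⟨_ | _, R, a⟩ := L
  · have := hπ ⟨false, R, a⟩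
    simp only [Lit.neg, Bool.not_false] at this
    simp only [Struc.SatLit, StrucOf, Bool.false_eq_true, if_false, not_not]
    tauto
  · simp [Struc.SatLit, StrucOf]

end Satisfaction

section Evaluation

variable {𝒱 : Vocab} {Vars A K : Type} [DecidableEq Vars] [Fintype A] [DecidableEq A]
  [CommSemiring K] {π : Lit 𝒱 A → K} {𝔄 : Struc 𝒱 A}

theorem eval_comp_ringHom {K' : Type} [CommSemiring K'] (g : K →+* K') (φ : Formula 𝒱 Vars)
    (ν : Vars → A) : eval (g ∘ π) φ ν = g (eval π φ ν) := by
  induction φ using Formula.induction_nnfNeg generalizing ν with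
  | rel | nrel => simp [_root_.eval]
  | equal | nequal => simp only [_root_.eval]; split <;> simp
  | and φ ψ ihφ ihψ => simp only [_root_.eval, map_mul, ihφ, ihψ]
  | or φ ψ ihφ ihψ => simp only [_root_.eval, map_add, ihφ, ihψ]
  | all x φ ih => simp only [_root_.eval, map_prod, ih]
  | ex x φ ih => simp only [_root_.eval, map_sum, ih]
  | not φ ih => simp only [_root_.eval, ih]

theorem sat_of_eval_ne_zero (hπ : ∀ L, π L ≠ 0 → 𝔄.SatLit L) (φ : Formula 𝒱 Vars)
    (ν : Vars → A) : eval π φ ν ≠ 0 → Sat 𝔄 φ ν := by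
  induction φ using Formula.induction_nnfNeg generalizing ν <;> simp only [_root_.eval, Sat]
  case rel | nrel => exact hπ _
  case equal | nequal => split <;> simp_all
  case and φ ψ ihφ ihψ =>
    exact fun h => ⟨ihφ ν (left_ne_zero_of_mul h), ihψ ν (right_ne_zero_of_mul h)⟩
  case or φ ψ ihφ ihψ =>
    intro h
    by_contra! hn
    exact h (by rw [not_not.1 (mt (ihφ ν) hn.1), not_not.1 (mt (ihψ ν) hn.2), add_zero])
  case all x φ ih =>
    exact fun h a => ih _ fun h0 => h (Finset.prod_eq_zero (Finset.mem_univ a) h0)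
  case ex x φ ih =>
    intro h
    obtain ⟨a, -, ha⟩ := Finset.exists_ne_zero_of_sum_ne_zero h
    exact ⟨a, ih _ ha⟩
  case not φ ih => exact fun h => (sat_nnfNeg φ ν).1 (ih ν h)

theorem eval_ne_zero_of_sat [Nontrivial K] (hK : IsPositive K)
    (hπ : ∀ L, 𝔄.SatLit L → π L ≠ 0) (φ : Formula 𝒱 Vars) (ν : Vars → A) :
    Sat 𝔄 φ ν → eval π φ ν ≠ 0 := by
  have : NoZeroDivisors K := ⟨hK.2 _ _⟩
  induction φ using Formula.induction_nnfNeg generalizing ν <;> simp only [_root_.eval, Sat]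
  case rel R v => exact hπ ⟨true, R, fun i => ν (v i)⟩
  case nrel R v => exact hπ ⟨false, R, fun i => ν (v i)⟩
  case equal | nequal => split <;> simp_all
  case and φ ψ ihφ ihψ => exact fun h => mul_ne_zero (ihφ ν h.1) (ihψ ν h.2)
  case or φ ψ ihφ ihψ =>
    rintro (h | h) h0
    · exact ihφ ν h (hK.1 _ _ h0).1
    · exact ihψ ν h (hK.1 _ _ h0).2
  case all x φ ih => exact fun h => Finset.prod_ne_zero_iff.2 fun a _ => ih _ (h a)
  case ex x φ ih =>
    rintro ⟨a, ha⟩ h0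
    rw [← Finset.add_sum_erase _ _ (Finset.mem_univ a)] at h0
    exact ih _ ha (hK.1 _ _ h0).1
  case not φ ih => exact fun h => ih ν ((sat_nnfNeg φ ν).2 h)

end Evaluation

theorem Nat.isPositive : IsPositive ℕ :=
  ⟨fun _ _ => Nat.add_eq_zero_iff.1, fun _ _ => Nat.mul_eq_zero.1⟩

namespace DualPoly

variable {X R : Type} [CommSemiring R]

noncomputable def lift (f : X ⊕ X → R) (hf : ∀ p, f (.inl p) * f (.inr p) = 0) :
    DualPoly X →+* R :=
  (dualCon X).lift (eval₂Hom (Nat.castRingHom R) f) <| RingCon.ringConGen_le.2 <| by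
    rintro _ _ ⟨rfl, p, rfl⟩
    simp [RingCon.ker_apply, hf p]

theorem lift_tok (f : X ⊕ X → R) (hf : ∀ p, f (.inl p) * f (.inr p) = 0) (x : X ⊕ X) :
    lift f hf (tok x) = f x :=
  eval₂_X _ _ _

instance : Nontrivial (DualPoly X) :=
  ⟨⟨1, 0, fun h => by simpa using congrArg (lift (fun _ => (0 : ℕ)) (by simp)) h⟩⟩

theorem tok_ne_zero (x : X ⊕ X) : tok x ≠ 0 := by
  classical
  let f : X ⊕ X → ℕ := fun y => if y = x then 1 else 0
  have hf : ∀ p, f (.inl p) * f (.inr p) = 0 := by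
    intro p; rcases x with x | x <;> simp [f]
  intro h
  simpa [lift_tok, f] using congrArg (lift f hf) h

end DualPoly

section ProvenanceTracking

variable {𝒱 : Vocab} {A X : Type} {β : Lit 𝒱 A → DualPoly X}

theorem ProvTracking.eq_zero_or_eq_one_or_eq_tok (hβ : ProvTracking β) (L : Lit 𝒱 A) :
    β L = 0 ∨ β L = 1 ∨ ∃ x, β L = tok x := by
  rcases hL : L.pos
  · obtain h | h | ⟨p, hp⟩ := hβ.2.1 L hL <;> simp_all
  · obtain h | h | ⟨p, hp⟩ := hβ.1 L hL <;> simp_all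

theorem ProvTracking.not_tok_inl_mem_range_and_tok_inr_mem_range (hβ : ProvTracking β)
    (hβ' : ModelDefining β) (p : X) : ¬ (tok (.inl p) ∈ Set.range β ∧ tok (.inr p) ∈ Set.range β) := by
  rintro ⟨⟨L, hL⟩, ⟨L', hL'⟩⟩
  obtain rfl := hβ.2.2 L L' p hL hL'
  rcases hβ' L with h | h
  · exact DualPoly.tok_ne_zero _ (hL ▸ h.1)
  · exact DualPoly.tok_ne_zero _ (hL' ▸ h.2)

open Classical in
noncomputable def usedTokenEval (hβ : ProvTracking β) (hβ' : ModelDefining β) :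
    DualPoly X →+* ℕ :=
  DualPoly.lift (fun x => if tok x ∈ Set.range β then 1 else 0) fun p => by
    have := hβ.not_tok_inl_mem_range_and_tok_inr_mem_range hβ' p
    split_ifs <;> simp_all

theorem usedTokenEval_ne_zero_iff (hβ : ProvTracking β) (hβ' : ModelDefining β)
    (L : Lit 𝒱 A) : usedTokenEval hβ hβ' (β L) ≠ 0 ↔ β L ≠ 0 := by
  rcases hβ.eq_zero_or_eq_one_or_eq_tok L with h | h | ⟨x, h⟩
  · simp [h]
  · simp [h]
  · simp [usedTokenEval, h, DualPoly.lift_tok, DualPoly.tok_ne_zero]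
    exact ⟨L, h⟩

end ProvenanceTracking

/-- for a provenance-tracking, model-defining interpretation `β` with
defined model `𝔄_β`, and any sentence `φ`: `β⟦φ⟧ ≠ 0` iff `𝔄_β ⊨ φ`.  (This does not
follow from positivity, since `ℕ[X,X̄]` has divisors of zero.) -/
theorem provTracking_eval_ne_zero_iff_sat {𝒱 : Vocab} {Vars A X : Type}
    [DecidableEq Vars] [Fintype A] [DecidableEq A] [Nonempty A]
    (β : Lit 𝒱 A → DualPoly X) (hβ : ProvTracking β) (hβ' : ModelDefining β)
    (φ : Formula 𝒱 Vars) (hφ : φ.FV = ∅) (ν : Vars → A) :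
    eval β φ ν ≠ 0 ↔ Sat (StrucOf β) φ ν := by
  have hsat L := Struc.satLit_strucOf_iff hβ' L
  refine ⟨sat_of_eval_ne_zero (fun L => (hsat L).2) φ ν, fun h h0 => ?_⟩
  have hg : eval (usedTokenEval hβ hβ' ∘ β) φ ν ≠ 0 :=
    eval_ne_zero_of_sat Nat.isPositive
      (fun L hL => (usedTokenEval_ne_zero_iff hβ hβ' L).2 ((hsat L).1 hL)) φ ν h
  rw [eval_comp_ringHom, h0, map_zero] at hg
  exact hg rfl
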